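/- For symmetric positive definite matrices A and B, the matrix G = A^{1/2}(A^{-1/2} B A^{-1/2})^{1/2} A^{1/2} is the unique symmetric positive definite solution X of the Riccati equation X A⁻¹ X = B. -/

import Mathlib

open scoped Classical MatrixOrder in
/-- The symmetric positive definite square root of a positive definite matrix
(junk value \`0\` otherwise). -/
noncomputable def psqrt {p : ℕ} (A : Matrix (Fin p) (Fin p) ℝ) : Matrix (Fin p) (Fin p) ℝ :=
  if h : A.PosDef then CFC.sqrt A else 0

/-- The canonical geometric mean \`G = A^{1/2} (A^{-1/2} B A^{-1/2})^{1/2} A^{1/2}\`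
of two positive definite matrices. -/
noncomputable def gMean {p : ℕ} (A B : Matrix (Fin p) (Fin p) ℝ) : Matrix (Fin p) (Fin p) ℝ :=
  psqrt A * psqrt ((psqrt A)⁻¹ * B * (psqrt A)⁻¹) * psqrt A

open Matrix
open scoped MatrixOrder

lemma psqrt_of_posDef {p : ℕ} {A : Matrix (Fin p) (Fin p) ℝ} (hA : A.PosDef) :
    psqrt A = CFC.sqrt A := by
  simp [psqrt, hA]

lemma psqrt_mul_self {p : ℕ} {A : Matrix (Fin p) (Fin p) ℝ} (hA : A.PosDef) :
    psqrt A * psqrt A = A := by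
  rw [psqrt_of_posDef hA]; exact CFC.sqrt_mul_sqrt_self A hA.posSemidef.nonneg

/-- psd + injective mulVec implies posdef -/
lemma posDef_of_posSemidef_mulVec {p : ℕ} {M : Matrix (Fin p) (Fin p) ℝ}
    (hM : M.PosSemidef) (h : ∀ x : Fin p → ℝ, x ≠ 0 → M *ᵥ x ≠ 0) : M.PosDef := by
  refine PosDef.of_dotProduct_mulVec_pos hM.1 (fun x hx => ?_)
  rcases lt_or_eq_of_le (hM.dotProduct_mulVec_nonneg x) with h' | h'
  · exact h'
  · exact absurd ((hM.dotProduct_mulVec_zero_iff x).mp h'.symm) (h x hx)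

lemma psqrt_posDef {p : ℕ} {A : Matrix (Fin p) (Fin p) ℝ} (hA : A.PosDef) :
    (psqrt A).PosDef := by
  apply posDef_of_posSemidef_mulVec (psqrt_of_posDef hA ▸ (CFC.sqrt_nonneg A).posSemidef)
  intro x hx hSx
  have hAx : A *ᵥ x = 0 := by
    rw [← psqrt_mul_self hA, ← Matrix.mulVec_mulVec, hSx, Matrix.mulVec_zero]
  have := hA.dotProduct_mulVec_pos hx
  rw [hAx, dotProduct_zero] at this
  exact lt_irrefl _ this

/-- conjugation of a posdef matrix by an invertible matrix -/
lemma posDef_conj {p : ℕ} {M N : Matrix (Fin p) (Fin p) ℝ}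
    (hM : M.PosDef) (hN : IsUnit N.det) : (Nᵀ * M * N).PosDef := by
  have hpsd : (Nᵀ * M * N).PosSemidef := by
    have := hM.posSemidef.conjTranspose_mul_mul_same N
    simpa using this
  apply posDef_of_posSemidef_mulVec hpsd
  intro x hx h0
  have hNx : N *ᵥ x ≠ 0 := fun h => hx (by
    have := Matrix.mulVec_injective_iff_isUnit.mpr (by
      rwa [← Matrix.isUnit_iff_isUnit_det] at hN) (a₁ := x) (a₂ := 0)
    simpa [h] using this)
  have hd := hM.dotProduct_mulVec_pos hNx
  have : (star x) ⬝ᵥ ((Nᵀ * M * N) *ᵥ x) = star (N *ᵥ x) ⬝ᵥ (M *ᵥ (N *ᵥ x)) := by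
    simp only [star_trivial, ← Matrix.mulVec_mulVec, Matrix.dotProduct_mulVec,
      Matrix.vecMul_transpose]
  rw [h0, dotProduct_zero] at this
  rw [← this] at hd
  exact lt_irrefl _ hd

/-- For positive definite `A` and `B`, the geometric mean
`G = A^{1/2}(A^{-1/2} B A^{-1/2})^{1/2} A^{1/2}` is the unique symmetric positive
definite solution `X` of the Riccati equation `X A⁻¹ X = B`. -/
theorem gMean_riccati {p : ℕ} (A B : Matrix (Fin p) (Fin p) ℝ)
    (hA : A.PosDef) (hB : B.PosDef) :
    (gMean A B).PosDef ∧ gMean A B * A⁻¹ * gMean A B = B ∧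
      ∀ X : Matrix (Fin p) (Fin p) ℝ, X.PosDef → X * A⁻¹ * X = B → X = gMean A B := by
  set S := psqrt A with hSdef
  have hS : S.PosDef := psqrt_posDef hA
  have hSS : S * S = A := psqrt_mul_self hA
  have hSdet : IsUnit S.det := (Matrix.isUnit_iff_isUnit_det S).mp hS.isUnit
  have hSinv : S⁻¹.PosDef := hS.inv
  have hST : Sᵀ = S := by
    rw [← Matrix.conjTranspose_eq_transpose_of_trivial, hS.isHermitian.eq]
  have hSinvT : (S⁻¹)ᵀ = S⁻¹ := by
    rw [Matrix.transpose_nonsing_inv, hST]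
  have hSinvdet : IsUnit S⁻¹.det := (Matrix.isUnit_iff_isUnit_det _).mp hSinv.isUnit
  set C := S⁻¹ * B * S⁻¹ with hCdef
  have hC : C.PosDef := by
    have h := posDef_conj hB hSinvdet
    rwa [hSinvT] at h
  set T := psqrt C with hTdef
  have hT : T.PosDef := psqrt_posDef hC
  have hTT : T * T = C := psqrt_mul_self hC
  have hG : gMean A B = S * T * S := by rw [gMean, ← hSdef, ← hCdef, ← hTdef]
  have hAinv : A⁻¹ = S⁻¹ * S⁻¹ := by
    rw [← hSS, Matrix.mul_inv_rev]
  have hGpos : (gMean A B).PosDef := by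
    have h := posDef_conj hT hSdet
    rw [hST] at h
    rwa [hG]
  have key : ∀ X : Matrix (Fin p) (Fin p) ℝ, X * A⁻¹ * X = X * S⁻¹ * (S⁻¹ * X) := by
    intro X; rw [hAinv]; simp only [Matrix.mul_assoc]
  have cancel : ∀ U V : Matrix (Fin p) (Fin p) ℝ,
      (S * U * S) * A⁻¹ * (S * V * S) = S * (U * V) * S := by
    intro U V
    rw [hAinv]
    simp only [Matrix.mul_assoc]
    rw [Matrix.mul_nonsing_inv_cancel_left _ _ hSdet,
      Matrix.nonsing_inv_mul_cancel_left _ _ hSdet]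
  have hSCS : S * C * S = B := by
    rw [hCdef]
    simp only [Matrix.mul_assoc]
    rw [Matrix.nonsing_inv_mul _ hSdet, Matrix.mul_one,
      Matrix.mul_nonsing_inv_cancel_left _ _ hSdet]
  have hric : gMean A B * A⁻¹ * gMean A B = B := by
    rw [hG, cancel, hTT, hSCS]
  refine ⟨hGpos, hric, fun X hX hXric => ?_⟩
  set Y := S⁻¹ * X * S⁻¹ with hYdef
  have hY : Y.PosDef := by
    have h := posDef_conj hX hSinvdet
    rwa [hSinvT] at h
  have hYY : Y ^ 2 = C := by
    rw [pow_two, hYdef, hCdef, ← hXric, key]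
    rw [show S⁻¹ * X * S⁻¹ * (S⁻¹ * X * S⁻¹) = S⁻¹ * (X * S⁻¹ * (S⁻¹ * X) * S⁻¹) by
      simp only [Matrix.mul_assoc]]
    simp only [Matrix.mul_assoc]
  have hYT : Y = T := by
    rw [hTdef, psqrt_of_posDef hC]
    exact (CFC.sqrt_unique (by rw [← pow_two]; exact hYY) hY.posSemidef.nonneg).symm
  have hXY : X = S * Y * S := by
    rw [hYdef]
    simp only [Matrix.mul_assoc]
    rw [Matrix.nonsing_inv_mul _ hSdet, Matrix.mul_one,
      Matrix.mul_nonsing_inv_cancel_left _ _ hSdet]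
  rw [hXY, hYT, hG]
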